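/- Let n ≥ 3. For θ ∈ ℝ define the point p(θ) ∈ ℂ^n by p(θ)₁ = exp(iθ), p(θ)₂ = exp(i(θ + π/(n+1))), p(θ)₃ = exp(iπ/(n+1)), and p(θ)_i = 0 for 4 ≤ i ≤ n. Then for every θ ∈ ℝ: (i) 1 + ∑_{i=1}^n p(θ)_i^{n+1} = 0, so p(θ) lies on the affine Fermat hypersurface; (ii) |p(θ)_i| = |p(0)_i| for every i, i.e. the absolute values of all coordinates are independent of θ; and (iii) Re(p(θ)₁^{n+1}) = cos((n+1)·θ), which is a non-constant function of θ. -/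

import Mathlib

/-- The explicit curve `p(θ)` on the affine Fermat hypersurface used in the
counterexample part of Proposition 4.2: `p(θ)₁ = exp(iθ)`, `p(θ)₂ = exp(i(θ + π/(n+1)))`,
`p(θ)₃ = exp(iπ/(n+1))`, other coordinates zero (coordinates are 0-indexed below). It lies on
the hypersurface, its coordinate absolute values are independent of `θ`, and
`Re(p(θ)₁^{n+1}) = cos((n+1)θ)`, which is non-constant in `θ`. -/
theorem fermat_equimodular_curve
    (n : ℕ) (hn : 3 ≤ n) (p : ℝ → Fin n → ℂ)
    (hp : ∀ (θ : ℝ) (i : Fin n), p θ i =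
      if (i : ℕ) = 0 then Complex.exp (Complex.I * (θ : ℂ))
      else if (i : ℕ) = 1 then Complex.exp (Complex.I * ((θ + Real.pi / (n + 1) : ℝ) : ℂ))
      else if (i : ℕ) = 2 then Complex.exp (Complex.I * ((Real.pi / (n + 1) : ℝ) : ℂ))
      else 0) :
    (∀ θ : ℝ,
      (1 + ∑ i, p θ i ^ (n + 1) = 0) ∧
      (∀ i : Fin n, ‖p θ i‖ = ‖p 0 i‖) ∧
      ((p θ ⟨0, by omega⟩) ^ (n + 1)).re = Real.cos ((n + 1) * θ)) ∧
    ∃ θ₁ θ₂ : ℝ,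
      ((p θ₁ ⟨0, by omega⟩) ^ (n + 1)).re ≠ ((p θ₂ ⟨0, by omega⟩) ^ (n + 1)).re := by
  set i0 : Fin n := ⟨0, by omega⟩
  set i1 : Fin n := ⟨1, by omega⟩
  set i2 : Fin n := ⟨2, by omega⟩
  have hne : (n : ℂ) + 1 ≠ 0 := by
    exact_mod_cast (Nat.cast_add_one_ne_zero n : (n : ℂ) + 1 ≠ 0)
  have hre : ∀ θ : ℝ, ((p θ i0) ^ (n + 1)).re = Real.cos ((n + 1) * θ) := by
    intro θ
    rw [hp θ i0]
    simp only [i0]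
    norm_num
    rw [← Complex.exp_nat_mul,
      show ((n+1:ℕ):ℂ) * (Complex.I * (θ:ℂ)) = ((((n:ℝ)+1)*θ : ℝ) : ℂ) * Complex.I by push_cast; ring,
      Complex.exp_ofReal_mul_I_re]
  refine ⟨fun θ => ⟨?_, ?_, hre θ⟩, 0, Real.pi / (n+1), ?_⟩
  · -- hypersurface equation
    have hzero : ∀ x ∈ Finset.univ, x ∉ ({i0, i1, i2} : Finset (Fin n)) →
        p θ x ^ (n + 1) = 0 := by
      intro x _ hx
      simp only [Finset.mem_insert, Finset.mem_singleton] at hx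
      push_neg at hx
      obtain ⟨h0, h1, h2⟩ := hx
      rw [hp θ x]
      have : (x : ℕ) ≠ 0 := fun h => h0 (Fin.ext h)
      have : (x : ℕ) ≠ 1 := fun h => h1 (Fin.ext h)
      have : (x : ℕ) ≠ 2 := fun h => h2 (Fin.ext h)
      simp_all [pow_succ]
    rw [← Finset.sum_subset (Finset.subset_univ ({i0, i1, i2} : Finset (Fin n))) hzero]
    have h01 : i0 ≠ i1 := by simp [i0, i1, Fin.ext_iff]
    have h02 : i0 ≠ i2 := by simp [i0, i2, Fin.ext_iff]
    have h12 : i1 ≠ i2 := by simp [i1, i2, Fin.ext_iff]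
    rw [Finset.sum_insert (by simp [h01, h02]), Finset.sum_insert (by simp [h12]),
      Finset.sum_singleton, hp θ i0, hp θ i1, hp θ i2]
    simp only [i0, i1, i2]
    norm_num
    rw [← Complex.exp_nat_mul, ← Complex.exp_nat_mul, ← Complex.exp_nat_mul]
    have e1 : ((n:ℂ)+1) * (Complex.I * (θ:ℂ)) = Complex.I * (((n:ℂ)+1) * θ) := by ring
    have e2 : ((n:ℂ)+1) * (Complex.I * ((θ:ℂ) + (Real.pi:ℂ)/((n:ℂ)+1))) =
        Complex.I * (((n:ℂ)+1) * θ) + Complex.I * Real.pi := by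
      field_simp
    have e3 : ((n:ℂ)+1) * (Complex.I * ((Real.pi:ℂ)/((n:ℂ)+1))) = Complex.I * Real.pi := by
      field_simp
    push_cast
    rw [e1, e2, e3, Complex.exp_add, mul_comm Complex.I (Real.pi:ℂ), Complex.exp_pi_mul_I]
    ring
  · -- abs independent of θ
    intro i
    rw [hp θ i, hp 0 i]
    split_ifs <;> simp [Complex.norm_exp]
  · -- nonconstant
    rw [hre 0, hre (Real.pi / (n+1))]
    have : ((n:ℝ)+1) * (Real.pi / ((n:ℝ)+1)) = Real.pi := by
      field_simp
    rw [this, mul_zero, Real.cos_zero, Real.cos_pi]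
    norm_num
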